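/- Fix k ≥ 1 and nonempty binary words u_1,…,u_k, v_1,…,v_k, each beginning with the digit 1. With M(u) = [[3^{|u|},0],[int(u),1]] ∈ ℕ^{2×2}, define A_i = blockdiag(M(u_i), M(u_i), M(v_i)) ∈ ℕ^{6×6} for 1 ≤ i ≤ k; let B ∈ ℕ^{6×6} have rows 1 and 2 equal to (int(u₁), 1, int(u₁), 1, 0, 0), rows 3 and 4 equal to (0, 0, int(u₁), 1, 0, 0), and rows 5 and 6 equal to (0, 0, 0, 0, int(v₁), 1); and let C ∈ ℕ^{6×6} have C_{3,1} = C_{5,1} = 1 and all other entries 0. Then the set {A_1,…,A_k, B, C} is synchronizable if and only if there exist t ≥ 1 and indices i_2,…,i_t ∈ {1,…,k} such that u₁u_{i_2}⋯u_{i_t} = v₁v_{i_2}⋯v_{i_t} (for t = 1 this condition reads u₁ = v₁). -/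

import Mathlib

/-- The value of a binary word (most significant digit first) read as a ternary number. -/
def ternVal (u : List Bool) : ℕ :=
  u.foldl (fun a b => 3 * a + cond b 1 0) 0

/-- `M(u) = [[3^{|u|}, 0],[int(u), 1]]`. -/
def Mword (u : List Bool) : Matrix (Fin 2) (Fin 2) ℕ :=
  !![3 ^ u.length, 0; ternVal u, 1]

/-- The `6 × 6` block-diagonal matrix with `2 × 2` diagonal blocks `X, Y, Z`. -/
def blockDiag3 (X Y Z : Matrix (Fin 2) (Fin 2) ℕ) : Matrix (Fin 6) (Fin 6) ℕ :=
  !![X 0 0, X 0 1, 0, 0, 0, 0;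
     X 1 0, X 1 1, 0, 0, 0, 0;
     0, 0, Y 0 0, Y 0 1, 0, 0;
     0, 0, Y 1 0, Y 1 1, 0, 0;
     0, 0, 0, 0, Z 0 0, Z 0 1;
     0, 0, 0, 0, Z 1 0, Z 1 1]

/-- The matrix `B` whose rows 1 and 2 are `(int u₁, 1, int u₁, 1, 0, 0)`, whose rows 3 and 4
are `(0, 0, int u₁, 1, 0, 0)`, and whose rows 5 and 6 are `(0, 0, 0, 0, int v₁, 1)`. -/
def Bbig (u₁ v₁ : List Bool) : Matrix (Fin 6) (Fin 6) ℕ :=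
  !![ternVal u₁, 1, ternVal u₁, 1, 0, 0;
     ternVal u₁, 1, ternVal u₁, 1, 0, 0;
     0, 0, ternVal u₁, 1, 0, 0;
     0, 0, ternVal u₁, 1, 0, 0;
     0, 0, 0, 0, ternVal v₁, 1;
     0, 0, 0, 0, ternVal v₁, 1]

/-- The matrix `C` with `C_{3,1} = C_{5,1} = 1` (1-indexed) and all other entries `0`. -/
def Cmat : Matrix (Fin 6) (Fin 6) ℕ :=
  !![0,0,0,0,0,0;
     0,0,0,0,0,0;
     1,0,0,0,0,0;
     0,0,0,0,0,0;
     1,0,0,0,0,0;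
     0,0,0,0,0,0]

/-- A matrix is *synchronizing* if there is a column index `i` such that an entry `A j k` is
nonzero exactly when `k = i`, and all entries of that column coincide. -/
def IsSync (A : Matrix (Fin 6) (Fin 6) ℕ) : Prop :=
  ∃ i, (∀ j k, A j k ≠ 0 ↔ k = i) ∧ (∀ j j', A j i = A j' i)

/-- A set of matrices is *synchronizable* if some nonempty finite product of its elements
(with repetitions allowed) is synchronizing. -/
def IsSynchronizable (S : Set (Matrix (Fin 6) (Fin 6) ℕ)) : Prop :=
  ∃ l : List (Matrix (Fin 6) (Fin 6) ℕ), l ≠ [] ∧ (∀ A ∈ l, A ∈ S) ∧ IsSync l.prod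

/-!
`C` has rank one: `C = c ⊗ e₀` with `c = wordVec [] []`, so a product `Q * C * R` can only be
synchronizing if `Q *ᵥ c` is a nonzero constant vector. Products of the `A_i` and `B` alone never
synchronize: row 1 keeps a nonzero entry among the columns `0,…,3` and row 5 among the columns
`4, 5`. So let `Q` be the part of a synchronizing product before its first `C`, and read `Q *ᵥ c`
from right to left. A product `A_w` of `A_i`'s sends `c` to the vector recording
`(3^|u_w|, int u_w)` and `(3^|v_w|, int v_w)`; a `B` turns this into `(x,x,x,x,y,y)` with
`x = int (u₁ u_w)` and `y = int (v₁ v_w)`; every further letter leaves the vector unbalanced for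
good, because `int v_i + 1 < 3^|v_i|` when `v_i` starts with `1`. Hence `x = y`, and `int` is
injective on words starting with `1`. Conversely, `B A_w C` is synchronizing when `x = y`.
-/

open Matrix

theorem ternVal_eq_ofDigits (u : List Bool) :
    ternVal u = Nat.ofDigits 3 (u.reverse.map Bool.toNat) := by
  rw [ternVal, List.foldl_eq_foldr_reverse, Nat.ofDigits_eq_foldr, List.foldr_map]
  congr 1
  funext b a
  rw [add_comm]
  rfl

theorem ternVal_append (s t : List Bool) :
    ternVal (s ++ t) = ternVal s * 3 ^ t.length + ternVal t := by
  simp only [ternVal_eq_ofDigits, List.reverse_append, List.map_append, Nat.ofDigits_append,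
    List.length_map, List.length_reverse]
  ring

theorem lt_three_of_mem_map_toNat {u : List Bool} {x : ℕ} (hx : x ∈ u.map Bool.toNat) :
    x < 3 := by
  obtain ⟨b, -, rfl⟩ := List.mem_map.1 hx
  exact (Bool.toNat_le b).trans_lt (by norm_num)

theorem ternVal_lt (u : List Bool) : ternVal u < 3 ^ u.length := by
  rw [ternVal_eq_ofDigits]
  simpa using Nat.ofDigits_lt_base_pow_length (b := 3) (l := u.reverse.map Bool.toNat)
    (by norm_num) fun _ => lt_three_of_mem_map_toNat

theorem ternVal_true_cons (t : List Bool) : ternVal (true :: t) = 3 ^ t.length + ternVal t := by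
  simpa [show ternVal [true] = 1 from rfl] using ternVal_append [true] t

theorem one_le_ternVal {u : List Bool} (hu : u.head? = some true) : 1 ≤ ternVal u := by
  obtain ⟨t, rfl⟩ := List.head?_eq_some_iff.1 hu
  rw [ternVal_true_cons]
  exact le_add_right (Nat.one_le_pow _ _ (by norm_num))

theorem ternVal_add_one_lt {u : List Bool} (hu : u.head? = some true) :
    ternVal u + 1 < 3 ^ u.length := by
  obtain ⟨t, rfl⟩ := List.head?_eq_some_iff.1 hu
  have := ternVal_lt t
  rw [ternVal_true_cons, List.length_cons, pow_succ]
  omega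

theorem digits_ternVal {u : List Bool} (hu : u.head? = some true) :
    Nat.digits 3 (ternVal u) = u.reverse.map Bool.toNat := by
  obtain ⟨t, rfl⟩ := List.head?_eq_some_iff.1 hu
  rw [ternVal_eq_ofDigits]
  refine Nat.digits_ofDigits 3 (by norm_num) _ (fun _ => lt_three_of_mem_map_toNat) ?_
  intro _
  simp

theorem ternVal_injOn : Set.InjOn ternVal {u | u.head? = some true} := by
  intro u hu v hv h
  have := congrArg (Nat.digits 3) h
  rw [digits_ternVal hu, digits_ternVal hv] at this
  refine List.reverse_injective (List.map_injective_iff.2 (fun a b hab => ?_) this)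
  cases a <;> cases b <;> simp_all

theorem list_prod_mulVec_induction {n R : Type*} [Fintype n] [DecidableEq n] [Semiring R]
    {p : (n → R) → Prop} {L : List (Matrix n n R)} (hL : ∀ X ∈ L, ∀ w, p w → p (X *ᵥ w))
    {w : n → R} (hw : p w) : p (L.prod *ᵥ w) := by
  induction L with
  | nil => simpa using hw
  | cons X L ih =>
    rw [List.prod_cons, ← mulVec_mulVec]
    exact hL X List.mem_cons_self _ (ih fun Y hY => hL Y (List.mem_cons_of_mem X hY))

theorem mulVec_apply_of_locSync {P : Matrix (Fin 6) (Fin 6) ℕ} {i : Fin 6}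
    (hP : ∀ j k, P j k ≠ 0 ↔ k = i) (w : Fin 6 → ℕ) (j : Fin 6) :
    (P *ᵥ w) j = P j i * w i :=
  Finset.sum_eq_single (f := fun k => P j k * w k) i
    (fun k _ hk => by rw [not_ne_iff.1 (mt (hP j k).1 hk), zero_mul]) (absurd (Finset.mem_univ i))

theorem IsSync.left_const_of_vecMulVec {a b : Fin 6 → ℕ} (h : IsSync (vecMulVec a b)) :
    a 0 ≠ 0 ∧ ∀ j, a j = a 0 := by
  obtain ⟨i, hi, hcol⟩ := h
  have hi0 : a 0 * b i ≠ 0 := (hi 0 i).2 rfl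
  refine ⟨left_ne_zero_of_mul hi0, fun j => ?_⟩
  have := hcol j 0
  simp only [vecMulVec_apply] at this
  exact Nat.eq_of_mul_eq_mul_right (Nat.pos_of_ne_zero (right_ne_zero_of_mul hi0)) this

theorem isSync_vecMulVec_const_single {x y : ℕ} (hx : x ≠ 0) (hy : y ≠ 0) (i : Fin 6) :
    IsSync (vecMulVec (fun _ => x) (Pi.single i y)) := by
  refine ⟨i, fun j k => ?_, fun j j' => rfl⟩
  by_cases hk : k = i <;> simp [vecMulVec_apply, hk, hx, hy]

abbrev pairMatrix (a b : List Bool) : Matrix (Fin 6) (Fin 6) ℕ :=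
  blockDiag3 (Mword a) (Mword a) (Mword b)

def wordVec (a b : List Bool) : Fin 6 → ℕ :=
  ![0, 0, 3 ^ a.length, ternVal a, 3 ^ b.length, ternVal b]

def pairVec (x y : ℕ) : Fin 6 → ℕ := ![x, x, x, x, y, y]

theorem pairVec_self (x : ℕ) : pairVec x x = fun _ => x := by
  ext i
  fin_cases i <;> rfl

theorem pairMatrix_mulVec (a b : List Bool) (w : Fin 6 → ℕ) :
    pairMatrix a b *ᵥ w = ![3 ^ a.length * w 0, ternVal a * w 0 + w 1, 3 ^ a.length * w 2,
      ternVal a * w 2 + w 3, 3 ^ b.length * w 4, ternVal b * w 4 + w 5] := by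
  ext i
  fin_cases i <;> simp [blockDiag3, Mword, mulVec, dotProduct, Fin.sum_univ_six]

theorem Bbig_mulVec (u₁ v₁ : List Bool) (w : Fin 6 → ℕ) :
    Bbig u₁ v₁ *ᵥ w = ![ternVal u₁ * w 0 + w 1 + (ternVal u₁ * w 2 + w 3),
      ternVal u₁ * w 0 + w 1 + (ternVal u₁ * w 2 + w 3), ternVal u₁ * w 2 + w 3,
      ternVal u₁ * w 2 + w 3, ternVal v₁ * w 4 + w 5, ternVal v₁ * w 4 + w 5] := by
  ext i
  fin_cases i <;> simp [Bbig, mulVec, dotProduct, Fin.sum_univ_six] <;> ring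

theorem Cmat_eq_vecMulVec : Cmat = vecMulVec (wordVec [] []) (Pi.single 0 1) := by
  ext i j
  fin_cases i <;> fin_cases j <;> rfl

theorem pairMatrix_mulVec_wordVec (a b a' b' : List Bool) :
    pairMatrix a b *ᵥ wordVec a' b' = wordVec (a ++ a') (b ++ b') := by
  rw [pairMatrix_mulVec]
  ext i
  fin_cases i <;> simp [wordVec, ternVal_append, pow_add]

theorem Bbig_mulVec_wordVec (u₁ v₁ a b : List Bool) :
    Bbig u₁ v₁ *ᵥ wordVec a b = pairVec (ternVal (u₁ ++ a)) (ternVal (v₁ ++ b)) := by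
  rw [Bbig_mulVec]
  ext i
  fin_cases i <;> simp [wordVec, pairVec, ternVal_append]

section Generators

variable {ι : Type*} (u₁ v₁ : List Bool) (u v : ι → List Bool)

def abGens : Set (Matrix (Fin 6) (Fin 6) ℕ) :=
  insert (Bbig u₁ v₁) (Set.range fun i => pairMatrix (u i) (v i))

def Admissible (w : Fin 6 → ℕ) : Prop :=
  1 ≤ w 1 ∧ 1 ≤ w 5 ∧ w 5 ≤ w 4

/-- The possible values of `Q *ᵥ wordVec [] []` for a product `Q` of generators in `abGens`,
according to whether `Q` is a product of `A_i`'s, is `B A_{i_2} ⋯ A_{i_t}`, or has further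
letters in front of its last `B`. -/
def Reachable (w : Fin 6 → ℕ) : Prop :=
  (∃ l : List ι, w = wordVec (l.map u).flatten (l.map v).flatten) ∨
  (∃ l : List ι,
    w = pairVec (ternVal (u₁ ++ (l.map u).flatten)) (ternVal (v₁ ++ (l.map v).flatten))) ∨
  (Admissible w ∧ (w 2 < w 0 ∨ w 5 < w 4))

variable {u₁ v₁ u v}

theorem le_mulVec_apply_of_mem_abGens {X : Matrix (Fin 6) (Fin 6) ℕ}
    (hX : X ∈ abGens u₁ v₁ u v) (w : Fin 6 → ℕ) : w 1 ≤ (X *ᵥ w) 1 ∧ w 5 ≤ (X *ᵥ w) 5 := by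
  rcases hX with rfl | ⟨i, rfl⟩
  · simp only [Bbig_mulVec, cons_val]; omega
  · simp only [pairMatrix_mulVec, cons_val]; omega

theorem admissible_pairVec {x y : ℕ} (hx : 1 ≤ x) (hy : 1 ≤ y) : Admissible (pairVec x y) :=
  ⟨hx, hy, le_rfl⟩

theorem Admissible.mulVec {w : Fin 6 → ℕ} (hw : Admissible w) {X : Matrix (Fin 6) (Fin 6) ℕ}
    (hX : X ∈ abGens u₁ v₁ u v) : Admissible (X *ᵥ w) := by
  obtain ⟨h1, h5, h54⟩ := hw
  obtain ⟨hX1, hX5⟩ := le_mulVec_apply_of_mem_abGens hX w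
  refine ⟨h1.trans hX1, h5.trans hX5, ?_⟩
  rcases hX with rfl | ⟨i, rfl⟩
  · simp only [Bbig_mulVec, cons_val, le_refl]
  · simp only [pairMatrix_mulVec, cons_val]
    nlinarith [ternVal_lt (v i)]

theorem Admissible.unbalanced_mulVec (hv : ∀ i, (v i).head? = some true) {w : Fin 6 → ℕ}
    (hw : Admissible w) {X : Matrix (Fin 6) (Fin 6) ℕ} (hX : X ∈ abGens u₁ v₁ u v) :
    (X *ᵥ w) 2 < (X *ᵥ w) 0 ∨ (X *ᵥ w) 5 < (X *ᵥ w) 4 := by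
  obtain ⟨h1, h5, h54⟩ := hw
  rcases hX with rfl | ⟨i, rfl⟩
  · left
    simp only [Bbig_mulVec, cons_val]
    omega
  · right
    simp only [pairMatrix_mulVec, cons_val]
    nlinarith [ternVal_add_one_lt (hv i)]

theorem Reachable.mulVec (hu₁ : u₁.head? = some true) (hv₁ : v₁.head? = some true)
    (hv : ∀ i, (v i).head? = some true) {w : Fin 6 → ℕ} (hw : Reachable u₁ v₁ u v w)
    {X : Matrix (Fin 6) (Fin 6) ℕ} (hX : X ∈ abGens u₁ v₁ u v) :
    Reachable u₁ v₁ u v (X *ᵥ w) := by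
  have of_admissible : Admissible w → Reachable u₁ v₁ u v (X *ᵥ w) := fun h =>
    Or.inr (Or.inr ⟨h.mulVec hX, h.unbalanced_mulVec hv hX⟩)
  rcases hw with ⟨l, rfl⟩ | ⟨l, rfl⟩ | ⟨hw, -⟩
  · rcases hX with rfl | ⟨i, rfl⟩
    · exact Or.inr (Or.inl ⟨l, Bbig_mulVec_wordVec _ _ _ _⟩)
    · exact Or.inl ⟨i :: l, pairMatrix_mulVec_wordVec _ _ _ _⟩
  · exact of_admissible (admissible_pairVec (one_le_ternVal (by simp [hu₁]))
      (one_le_ternVal (by simp [hv₁])))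
  · exact of_admissible hw

theorem Reachable.exists_solution (hu₁ : u₁.head? = some true) (hv₁ : v₁.head? = some true)
    {w : Fin 6 → ℕ} (hw : Reachable u₁ v₁ u v w) (h0 : w 0 ≠ 0) (hconst : ∀ j, w j = w 0) :
    ∃ l : List ι, u₁ ++ (l.map u).flatten = v₁ ++ (l.map v).flatten := by
  rcases hw with ⟨l, rfl⟩ | ⟨l, rfl⟩ | ⟨-, hunbalanced⟩
  · exact absurd rfl h0
  · exact ⟨l, ternVal_injOn (by simp [hu₁]) (by simp [hv₁]) (hconst 4).symm⟩
  · have := hconst 2; have := hconst 4; have := hconst 5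
    omega

theorem list_prod_pairMatrix_mulVec_wordVec_nil (l : List ι) :
    (l.map fun i => pairMatrix (u i) (v i)).prod *ᵥ wordVec [] [] =
      wordVec (l.map u).flatten (l.map v).flatten := by
  induction l with
  | nil => exact one_mulVec _
  | cons i l ih =>
    rw [List.map_cons, List.prod_cons, ← mulVec_mulVec, ih, pairMatrix_mulVec_wordVec]
    rfl

theorem not_isSync_list_prod {L : List (Matrix (Fin 6) (Fin 6) ℕ)}
    (hL : ∀ X ∈ L, X ∈ abGens u₁ v₁ u v) : ¬ IsSync L.prod := by
  rintro ⟨i, hi, -⟩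
  have h1 : 1 ≤ (L.prod *ᵥ ![1, 1, 1, 1, 0, 0]) 1 :=
    list_prod_mulVec_induction (p := (1 ≤ · 1))
      (fun X hX w hw => hw.trans (le_mulVec_apply_of_mem_abGens (hL X hX) w).1) le_rfl
  have h5 : 1 ≤ (L.prod *ᵥ ![0, 0, 0, 0, 1, 1]) 5 :=
    list_prod_mulVec_induction (p := (1 ≤ · 5))
      (fun X hX w hw => hw.trans (le_mulVec_apply_of_mem_abGens (hL X hX) w).2) le_rfl
  rw [mulVec_apply_of_locSync hi] at h1 h5
  fin_cases i <;> simp at h1 h5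

theorem exists_solution_of_isSynchronizable (hu₁ : u₁.head? = some true)
    (hv₁ : v₁.head? = some true) (hv : ∀ i, (v i).head? = some true)
    (h : IsSynchronizable (insert (Bbig u₁ v₁) (insert Cmat
      (Set.range fun i => pairMatrix (u i) (v i))))) :
    ∃ l : List ι, u₁ ++ (l.map u).flatten = v₁ ++ (l.map v).flatten := by
  obtain ⟨L, -, hL, hsync⟩ := h
  have mem_abGens : ∀ X ∈ L, X ≠ Cmat → X ∈ abGens u₁ v₁ u v := fun X hX hne =>
    Set.mem_of_mem_insert_of_ne (Set.insert_comm _ _ _ ▸ hL X hX) hne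
  by_cases hC : Cmat ∈ L
  · obtain ⟨L₁, L₂, rfl, hL₁⟩ := List.eq_append_cons_of_mem hC
    rw [List.prod_append, List.prod_cons, Cmat_eq_vecMulVec, vecMulVec_mul, mul_vecMulVec]
      at hsync
    obtain ⟨h0, hconst⟩ := hsync.left_const_of_vecMulVec
    have hreach : Reachable u₁ v₁ u v (L₁.prod *ᵥ wordVec [] []) :=
      list_prod_mulVec_induction (fun X hX w hw => hw.mulVec hu₁ hv₁ hv
        (mem_abGens X (List.mem_append_left _ hX) (ne_of_mem_of_not_mem hX hL₁)))
        (Or.inl ⟨[], rfl⟩)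
    exact hreach.exists_solution hu₁ hv₁ h0 hconst
  · exact absurd hsync
      (not_isSync_list_prod fun X hX => mem_abGens X hX (ne_of_mem_of_not_mem hX hC))

theorem isSynchronizable_of_solution (hu₁ : u₁.head? = some true) (l : List ι)
    (hl : u₁ ++ (l.map u).flatten = v₁ ++ (l.map v).flatten) :
    IsSynchronizable (insert (Bbig u₁ v₁) (insert Cmat
      (Set.range fun i => pairMatrix (u i) (v i)))) := by
  refine ⟨Bbig u₁ v₁ :: (l.map fun i => pairMatrix (u i) (v i)) ++ [Cmat], by simp,
    by aesop, ?_⟩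
  rw [List.prod_append, List.prod_cons, List.prod_singleton, Cmat_eq_vecMulVec, mul_vecMulVec,
    ← mulVec_mulVec, list_prod_pairMatrix_mulVec_wordVec_nil, Bbig_mulVec_wordVec, ← hl,
    pairVec_self]
  exact isSync_vecMulVec_const_single (Nat.one_le_iff_ne_zero.1 (one_le_ternVal (by simp [hu₁])))
    one_ne_zero 0

end Generators

/-- For nonempty binary words `u_1, …, u_k, v_1, …, v_k` all beginning with the digit `1`,
the set `{A_1, …, A_k, B, C}` is synchronizable iff there are `t ≥ 1` and indices
`i_2, …, i_t` with `u₁ u_{i_2} ⋯ u_{i_t} = v₁ v_{i_2} ⋯ v_{i_t}`. -/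
theorem fpcp_reduces_to_nat_sync {k : ℕ} (hk : 1 ≤ k) (u v : Fin k → List Bool)
    (hu : ∀ i, (u i).head? = some true) (hv : ∀ i, (v i).head? = some true) :
    IsSynchronizable
        (insert (Bbig (u ⟨0, hk⟩) (v ⟨0, hk⟩)) (insert Cmat
          (Set.range fun i => blockDiag3 (Mword (u i)) (Mword (u i)) (Mword (v i))))) ↔
      ∃ l : List (Fin k),
        u ⟨0, hk⟩ ++ (l.map u).flatten = v ⟨0, hk⟩ ++ (l.map v).flatten :=
  ⟨exists_solution_of_isSynchronizable (hu _) (hv _) hv,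
    fun ⟨l, hl⟩ => isSynchronizable_of_solution (hu _) l hl⟩
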